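/- For all 1 ≤ i < j ≤ n and every unit vector φ in the kernel of H_n(ψ), one has ⟨φ| (|1⟩⟨1|_i ⊗ |v^⊥⟩⟨v^⊥|_j) |φ⟩ ≤ |λ|^{−2(j−i)} · s²/(1 − |c|), where |1⟩⟨1|_i acts on qubit i and |v^⊥⟩⟨v^⊥|_j acts on qubit j. -/

import Mathlib

open scoped BigOperators
open Matrix Polynomial

noncomputable section

/-- A two-site operator `A` applied to qubits `i` and `j` of an `n`-qubit chain,
acting as the identity on the remaining qubits. -/
def twoSite (n : ℕ) (A : Matrix (Fin 2 × Fin 2) (Fin 2 × Fin 2) ℂ) (i j : Fin n) :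
    Matrix (Fin n → Fin 2) (Fin n → Fin 2) ℂ :=
  fun x y => A (x i, x j) (y i, y j) *
    ∏ k : Fin n, if k = i ∨ k = j then 1 else (if x k = y k then 1 else 0)

/-- The rank-one projector `|ψ⟩⟨ψ|` onto a two-qubit state `ψ`. -/
def vecProj (ψ : Fin 2 × Fin 2 → ℂ) : Matrix (Fin 2 × Fin 2) (Fin 2 × Fin 2) ℂ :=
  fun a b => ψ a * star (ψ b)

/-- Open-boundary chain Hamiltonian with (possibly) site-dependent forbidden states:
`H_n(ψ₁,…,ψ_{n-1}) = Σ_j |ψ_j⟩⟨ψ_j|_{j,j+1}` (here `ψs` is 0-indexed). -/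
def HnGen (n : ℕ) (ψs : ℕ → Fin 2 × Fin 2 → ℂ) :
    Matrix (Fin n → Fin 2) (Fin n → Fin 2) ℂ :=
  ∑ i : Fin n,
    if h : (i : ℕ) + 1 < n then twoSite n (vecProj (ψs (i : ℕ))) i ⟨(i : ℕ) + 1, h⟩ else 0

/-- Translation-invariant open-boundary Hamiltonian `H_n(ψ)`. -/
def Hn (n : ℕ) (ψ : Fin 2 × Fin 2 → ℂ) : Matrix (Fin n → Fin 2) (Fin n → Fin 2) ℂ :=
  HnGen n fun _ => ψ

/-- The matrix `T_ψ`. -/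
def Tmat (ψ : Fin 2 × Fin 2 → ℂ) : Matrix (Fin 2) (Fin 2) ℂ :=
  !![star (ψ (0, 1)), star (ψ (1, 1)); -star (ψ (0, 0)), -star (ψ (1, 0))]

/-- The projector onto the product state `u ⊗ ⋯ ⊗ u` on the qubits in the window `[a, b)`
(0-indexed), acting as the identity elsewhere. -/
def prodProjOn (n : ℕ) (u : Fin 2 → ℂ) (a b : ℕ) :
    Matrix (Fin n → Fin 2) (Fin n → Fin 2) ℂ :=
  fun x y => ∏ k : Fin n,
    if a ≤ (k : ℕ) ∧ (k : ℕ) < b then u (x k) * star (u (y k))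
    else (if x k = y k then 1 else 0)

/-
A ground state is annihilated by every bond term `|ψ⟩⟨ψ|_{k,k+1}` (they are positive
semidefinite), i.e. the contraction of `φ` with `⟨ψ|` on each bond vanishes. Written with the
eigen-data of `T_ψ`, this says that on every bond `μ₂ ⟨1|_k ⟨v^⊥|_{k+1} φ = μ₁ ⟨v^⊥|_k ⟨1|_{k+1} φ`.
Since `⟨1|` and `⟨v^⊥|` span the dual of `ℂ²` (as `s ≠ 0`), contracting the middle site with
either of them lets this swap relation propagate along the chain:
`μ₂^d ⟨1|_i ⟨v^⊥|_j φ = μ₁^d ⟨v^⊥|_i ⟨1|_j φ` with `d = j - i`. The correlator is the squared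
norm of the left-hand side, the right-hand side has norm at most `‖φ‖ = 1`, and
`s² / (1 - |c|) = 1 + |c| ≥ 1`.
-/

namespace SpinChain

open Function

section configurations

variable {ι σ : Type*} [Fintype ι]

theorem prod_ite_one_ite_eq {R : Type*} [CommMonoidWithZero R] [DecidableEq σ] (P : ι → Prop)
    [DecidablePred P] (x y : ι → σ) :
    (∏ k, if P k then (1 : R) else if x k = y k then 1 else 0) =
      if ∀ k, ¬P k → x k = y k then 1 else 0 := by
  refine (Finset.prod_congr rfl fun k _ => ?_).trans Fintype.prod_boole
  by_cases hk : P k <;> simp [hk]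

variable [DecidableEq ι] [Fintype σ]

theorem sum_sum_update {M : Type*} [AddCommMonoid M] (k : ι) (F : (ι → σ) → M) :
    ∑ x, ∑ a, F (update x k a) = Fintype.card σ • ∑ x, F x := by
  let e : Equiv.Perm ((ι → σ) × σ) :=
    Involutive.toPerm (fun p => (update p.1 k p.2, p.1 k)) fun p => by simp
  have he : ∀ p, (e p).1 = update p.1 k p.2 := fun _ => rfl
  calc ∑ x, ∑ a, F (update x k a) = ∑ p : (ι → σ) × σ, F (e p).1 := by
        simp only [he, Fintype.sum_prod_type]
    _ = ∑ p : (ι → σ) × σ, F p.1 := Equiv.sum_comp e fun p => F p.1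
    _ = _ := by simp [Fintype.sum_prod_type, Finset.smul_sum]

variable [DecidableEq σ] {R : Type*} [CommSemiring R] (x : ι → σ) (c : (ι → σ) → R)

theorem sum_mul_prod_ite_eq (t : ι) :
    ∑ y, c y * (∏ k, if k = t then (1 : R) else if x k = y k then 1 else 0) =
      ∑ a, c (update x t a) := by
  simp only [prod_ite_one_ite_eq, mul_ite, mul_one, mul_zero]
  refine (Fintype.sum_of_injective _ (update_injective x t) _ _ ?_ fun a => ?_).symm
  · intro y hy
    rw [if_neg]
    refine fun h => hy ⟨y t, funext fun k => ?_⟩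
    by_cases hk : k = t
    · subst hk; simp
    · simp [hk, h k hk]
  · rw [if_pos fun k hk => by simp [hk]]

theorem sum_mul_prod_ite_eq₂ {p q : ι} (hpq : p ≠ q) :
    ∑ y, c y * (∏ k, if k = p ∨ k = q then (1 : R) else if x k = y k then 1 else 0) =
      ∑ a, ∑ b, c (update (update x p a) q b) := by
  simp only [prod_ite_one_ite_eq, not_or, and_imp, mul_ite, mul_one, mul_zero]
  rw [← Fintype.sum_prod_type']
  refine (Fintype.sum_of_injective (fun ab : σ × σ => update (update x p ab.1) q ab.2)
    ?_ _ _ ?_ fun ab => ?_).symm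
  · intro ab ab' h
    have hp := congrFun h p
    have hq := congrFun h q
    simp [update_of_ne hpq] at hp hq
    exact Prod.ext hp hq
  · intro y hy
    rw [if_neg]
    refine fun h => hy ⟨(y p, y q), funext fun k => ?_⟩
    by_cases hkq : k = q
    · subst hkq; simp
    by_cases hkp : k = p
    · subst hkp; simp [hpq]
    · simp [hkp, hkq, h k hkp hkq]
  · rw [if_pos fun k hkp hkq => by simp [hkp, hkq]]

end configurations

section contraction

variable {ι σ : Type*} [DecidableEq ι] [Fintype σ]

/-- The bra `∑ a, f a ⟨a|` applied at site `k`; the result no longer depends on `x k`. -/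
def contract (k : ι) (f : σ → ℂ) : ((ι → σ) → ℂ) →ₗ[ℂ] (ι → σ) → ℂ where
  toFun φ x := ∑ a, f a * φ (update x k a)
  map_add' φ χ := by ext x; simp [mul_add, Finset.sum_add_distrib]
  map_smul' t φ := by ext x; simp [Finset.mul_sum, mul_left_comm]

variable {k l : ι} {f g : σ → ℂ} {φ : (ι → σ) → ℂ} {x : ι → σ}

theorem contract_apply : contract k f φ x = ∑ a, f a * φ (update x k a) := rfl

theorem contract_comm (h : k ≠ l) :
    contract k f (contract l g φ) = contract l g (contract k f φ) := by
  ext x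
  simp only [contract_apply, Finset.mul_sum, update_comm h]
  rw [Finset.sum_comm]
  exact Finset.sum_congr rfl fun _ _ => Finset.sum_congr rfl fun _ _ => by ring

theorem contract_mul_apply_of_ne (h : k ≠ l) (v : σ → ℂ) :
    contract k f (fun y => v (y l) * φ y) x = v (x l) * contract k f φ x := by
  simp [contract_apply, update_of_ne h.symm, Finset.mul_sum, mul_left_comm]

theorem normSq_contract_le (hf : ∑ a, Complex.normSq (f a) = 1) :
    Complex.normSq (contract k f φ x) ≤ ∑ a, Complex.normSq (φ (update x k a)) := by
  have hnorm : ‖contract k f φ x‖ ≤ ∑ a, ‖f a‖ * ‖φ (update x k a)‖ :=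
    (norm_sum_le _ _).trans_eq (by simp)
  calc Complex.normSq (contract k f φ x) = ‖contract k f φ x‖ ^ 2 := (Complex.sq_norm _).symm
    _ ≤ (∑ a, ‖f a‖ * ‖φ (update x k a)‖) ^ 2 := pow_le_pow_left₀ (norm_nonneg _) hnorm 2
    _ ≤ (∑ a, ‖f a‖ ^ 2) * ∑ a, ‖φ (update x k a)‖ ^ 2 := Finset.sum_mul_sq_le_sq_mul_sq _ _ _
    _ = _ := by simp [Complex.sq_norm, hf]

theorem sum_normSq_contract_le [Fintype ι] (hf : ∑ a, Complex.normSq (f a) = 1) :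
    ∑ x, Complex.normSq (contract k f φ x) ≤ Fintype.card σ * ∑ x, Complex.normSq (φ x) := by
  rw [← nsmul_eq_mul, ← sum_sum_update k]
  exact Finset.sum_le_sum fun x _ => normSq_contract_le hf

theorem sum_normSq_contract_contract_le [Fintype ι] (hf : ∑ a, Complex.normSq (f a) = 1)
    (hg : ∑ a, Complex.normSq (g a) = 1) :
    ∑ x, Complex.normSq (contract k f (contract l g φ) x) ≤
      Fintype.card σ ^ 2 * ∑ x, Complex.normSq (φ x) :=
  calc _ ≤ Fintype.card σ * ∑ x, Complex.normSq (contract l g φ x) := sum_normSq_contract_le hf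
    _ ≤ Fintype.card σ * (Fintype.card σ * ∑ x, Complex.normSq (φ x)) := by
      gcongr
      exact sum_normSq_contract_le hg
    _ = _ := by ring

def contract₂ (p q : ι) (F : σ × σ → ℂ) (φ : (ι → σ) → ℂ) (x : ι → σ) : ℂ :=
  ∑ a, ∑ b, F (a, b) * φ (update (update x p a) q b)

theorem contract_contract_apply :
    contract k f (contract l g φ) x = contract₂ k l (fun ab => f ab.1 * g ab.2) φ x := by
  simp [contract_apply, contract₂, Finset.mul_sum, mul_assoc]

theorem contract₂_update_update (h : k ≠ l) (F : σ × σ → ℂ) (a b : σ) :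
    contract₂ k l F φ (update (update x k a) l b) = contract₂ k l F φ x := by
  simp [contract₂, update_comm h.symm, update_idem]

theorem card_sq_mul_star_dotProduct [Fintype ι] (h : k ≠ l) (F : σ × σ → ℂ) :
    (Fintype.card σ ^ 2 : ℂ) * (star φ ⬝ᵥ fun x => F (x k, x l) * contract₂ k l (star F) φ x) =
      ∑ x, (Complex.normSq (contract₂ k l (star F) φ x) : ℂ) := by
  set B := contract₂ k l (star F) φ
  -- `B` ignores the sites `k, l`, so summing over their values turns the sum into `∑ |B|²`.
  set G : (ι → σ) → ℂ := fun y => star (φ y) * (F (y k, y l) * B y)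
  have hG : ∀ x a b, G (update (update x k a) l b) =
      star (φ (update (update x k a) l b)) * (F (a, b) * B x) := by
    simp [G, B, contract₂_update_update h, update_of_ne h]
  have hcard : (Fintype.card σ ^ 2 : ℂ) * (star φ ⬝ᵥ fun x => F (x k, x l) * B x) =
      ∑ x, ∑ a, ∑ b, star (φ (update (update x k a) l b)) * (F (a, b) * B x) := by
    calc _ = Fintype.card σ • Fintype.card σ • ∑ x, G x := by
          simp [dotProduct, G, Finset.mul_sum, pow_two, mul_assoc]
      _ = Fintype.card σ • ∑ x, ∑ b, G (update x l b) := by rw [sum_sum_update l]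
      _ = ∑ x, ∑ a, ∑ b, G (update (update x k a) l b) :=
          (sum_sum_update k fun y => ∑ b, G (update y l b)).symm
      _ = _ := by simp only [hG]
  rw [hcard]
  refine Finset.sum_congr rfl fun x _ => ?_
  rw [Complex.normSq_eq_conj_mul_self]
  simp only [B, contract₂, map_sum, Finset.sum_mul]
  refine Finset.sum_congr rfl fun a _ => Finset.sum_congr rfl fun b _ => ?_
  simp
  ring

end contraction

theorem eq_of_contract_eq {ι : Type*} [DecidableEq ι] {f g : Fin 2 → ℂ}
    (hfg : f 0 * g 1 - f 1 * g 0 ≠ 0) {k : ι} {φ χ : (ι → Fin 2) → ℂ}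
    (hf : contract k f φ = contract k f χ) (hg : contract k g φ = contract k g χ) : φ = χ := by
  have hval : ∀ x, φ (update x k 0) = χ (update x k 0) ∧ φ (update x k 1) = χ (update x k 1) := by
    intro x
    have h1 := congrFun hf x
    have h2 := congrFun hg x
    simp only [contract_apply, Fin.sum_univ_two] at h1 h2
    constructor
    · refine sub_eq_zero.mp (mul_left_cancel₀ hfg ?_)
      linear_combination g 1 * h1 - f 1 * h2
    · refine sub_eq_zero.mp (mul_left_cancel₀ hfg ?_)
      linear_combination f 0 * h2 - g 0 * h1
  funext x
  rw [← update_eq_self k x]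
  generalize x k = a
  fin_cases a
  exacts [(hval x).1, (hval x).2]

theorem star_apply_eq_of_Tmat_mulVec {ψ : Fin 2 × Fin 2 → ℂ} {μ₁ μ₂ c s : ℂ} (hs : s ≠ 0)
    (hT0 : (Tmat ψ).mulVec ![1, 0] = μ₁ • ![1, 0])
    (hTv : (Tmat ψ).mulVec ![c, s] = μ₂ • ![c, s]) :
    star ψ (0, 0) = 0 ∧ star ψ (0, 1) = μ₁ ∧ star ψ (1, 0) = -μ₂ ∧
      s * star ψ (1, 1) = c * (μ₂ - μ₁) := by
  have e0 := congrFun hT0 0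
  have e1 := congrFun hT0 1
  have v0 := congrFun hTv 0
  have v1 := congrFun hTv 1
  simp [Tmat, mulVec, dotProduct, Fin.sum_univ_two] at e0 e1 v0 v1
  simp only [e1, map_zero, zero_mul, neg_zero, zero_add] at v1
  simp only [Pi.star_apply, Complex.star_def]
  refine ⟨by simp [e1], e0, mul_right_cancel₀ hs ?_, ?_⟩
  · linear_combination -v1
  · linear_combination v0 - c * e0

theorem smul_contract_contract_eq_of_contract₂_eq_zero {ι : Type*} [DecidableEq ι]
    {Ψ : Fin 2 × Fin 2 → ℂ} {μ₁ μ₂ c s : ℂ}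
    (h00 : Ψ (0, 0) = 0) (h01 : Ψ (0, 1) = μ₁) (h10 : Ψ (1, 0) = -μ₂)
    (h11 : s * Ψ (1, 1) = c * (μ₂ - μ₁)) {p q : ι} {φ : (ι → Fin 2) → ℂ}
    (hΨ : contract₂ p q Ψ φ = 0) :
    μ₂ • contract p ![0, 1] (contract q ![s, -c] φ) =
      μ₁ • contract p ![s, -c] (contract q ![0, 1] φ) := by
  ext x
  have hx := congrFun hΨ x
  simp only [contract₂, Fin.sum_univ_two, h00, h01, h10, Pi.zero_apply] at hx
  simp [contract_contract_apply, contract₂, Fin.sum_univ_two]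
  linear_combination (-s) * hx + φ (update (update x p 1) q 1) * h11

section chain

variable {n : ℕ}

theorem twoSite_mulVec {p q : Fin n} (hpq : p ≠ q) (A : Matrix (Fin 2 × Fin 2) (Fin 2 × Fin 2) ℂ)
    (φ : (Fin n → Fin 2) → ℂ) (x : Fin n → Fin 2) :
    (twoSite n A p q *ᵥ φ) x =
      ∑ a, ∑ b, A (x p, x q) (a, b) * φ (update (update x p a) q b) := by
  simp only [mulVec, dotProduct, twoSite, mul_right_comm _ (∏ _, _)]
  rw [sum_mul_prod_ite_eq₂ x (fun y => A (x p, x q) (y p, y q) * φ y) hpq]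
  simp [update_of_ne hpq]

theorem twoSite_vecProj_mulVec {p q : Fin n} (hpq : p ≠ q) (ψ : Fin 2 × Fin 2 → ℂ)
    (φ : (Fin n → Fin 2) → ℂ) :
    twoSite n (vecProj ψ) p q *ᵥ φ = fun x => ψ (x p, x q) * contract₂ p q (star ψ) φ x := by
  ext x
  simp only [twoSite_mulVec hpq, vecProj, contract₂, Finset.mul_sum, Pi.star_apply, mul_assoc]

theorem prodProjOn_mulVec (t : Fin n) (u : Fin 2 → ℂ) (φ : (Fin n → Fin 2) → ℂ) :
    prodProjOn n u t (t + 1) *ᵥ φ = fun x => u (x t) * contract t (star u) φ x := by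
  ext x
  have hfactor : ∀ y : Fin n → Fin 2, prodProjOn n u t (t + 1) x y =
      u (x t) * star (u (y t)) * ∏ k, if k = t then 1 else if x k = y k then 1 else 0 := by
    intro y
    have hwindow : ∀ k : Fin n, (t : ℕ) ≤ k ∧ (k : ℕ) < t + 1 ↔ k = t := by
      intro k; rw [Fin.ext_iff]; omega
    rw [prodProjOn, ← Fintype.prod_ite_eq' t fun k => u (x k) * star (u (y k)),
      ← Finset.prod_mul_distrib]
    refine Finset.prod_congr rfl fun k _ => ?_
    simp only [hwindow]
    by_cases hk : k = t <;> simp [hk]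
  simp only [mulVec, dotProduct, hfactor, mul_right_comm _ (∏ _, _)]
  rw [sum_mul_prod_ite_eq x (fun y => u (x t) * star (u (y t)) * φ y) t, contract_apply,
    Finset.mul_sum]
  simp [mul_assoc]

theorem four_mul_star_dotProduct_twoSite_vecProj_mulVec {p q : Fin n} (hpq : p ≠ q)
    (ψ : Fin 2 × Fin 2 → ℂ) (φ : (Fin n → Fin 2) → ℂ) :
    4 * (star φ ⬝ᵥ (twoSite n (vecProj ψ) p q *ᵥ φ)) =
      ∑ x, (Complex.normSq (contract₂ p q (star ψ) φ x) : ℂ) := by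
  rw [twoSite_vecProj_mulVec hpq, ← card_sq_mul_star_dotProduct hpq]
  norm_num

theorem re_star_dotProduct_prodProjOn_mul_prodProjOn_mulVec {p q : Fin n} (hpq : p ≠ q)
    (u v : Fin 2 → ℂ) (φ : (Fin n → Fin 2) → ℂ) :
    (star φ ⬝ᵥ ((prodProjOn n u p (p + 1) * prodProjOn n v q (q + 1)) *ᵥ φ)).re =
      (∑ x, Complex.normSq (contract p (star u) (contract q (star v) φ) x)) / 4 := by
  suffices h : 4 * (star φ ⬝ᵥ ((prodProjOn n u p (p + 1) * prodProjOn n v q (q + 1)) *ᵥ φ)) =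
      ∑ x, (Complex.normSq (contract p (star u) (contract q (star v) φ) x) : ℂ) by
    have h4 := congrArg Complex.re h
    simp only [Complex.mul_re, Complex.re_ofNat, Complex.im_ofNat, zero_mul, sub_zero,
      Complex.re_sum, Complex.ofReal_re] at h4
    linarith
  set F : Fin 2 × Fin 2 → ℂ := fun ab => u ab.1 * v ab.2
  have hB : ∀ x, contract p (star u) (contract q (star v) φ) x = contract₂ p q (star F) φ x := by
    intro x
    rw [contract_contract_apply]
    congr 1
    ext ab
    simp [F]
  have hvec : (prodProjOn n u p (p + 1) * prodProjOn n v q (q + 1)) *ᵥ φ =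
      fun x => F (x p, x q) * contract₂ p q (star F) φ x := by
    ext x
    rw [← mulVec_mulVec, prodProjOn_mulVec, prodProjOn_mulVec]
    dsimp only
    rw [contract_mul_apply_of_ne hpq, hB]
    ring
  simp only [hB]
  rw [hvec, ← card_sq_mul_star_dotProduct hpq]
  norm_num

theorem contract₂_eq_zero_of_Hn_mulVec_eq_zero {ψ : Fin 2 × Fin 2 → ℂ} {φ : (Fin n → Fin 2) → ℂ}
    (hφ : Hn n ψ *ᵥ φ = 0) {p q : Fin n} (hq : (q : ℕ) = p + 1) :
    contract₂ p q (star ψ) φ = 0 := by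
  let bond : Fin n → Matrix (Fin n → Fin 2) (Fin n → Fin 2) ℂ := fun i =>
    if h : (i : ℕ) + 1 < n then twoSite n (vecProj ψ) i ⟨i + 1, h⟩ else 0
  let energy : Fin n → ℝ := fun i =>
    if h : (i : ℕ) + 1 < n then ∑ x, Complex.normSq (contract₂ i ⟨i + 1, h⟩ (star ψ) φ x) else 0
  have henergy : ∀ i, 4 * (star φ ⬝ᵥ (bond i *ᵥ φ)) = energy i := by
    intro i
    by_cases h : (i : ℕ) + 1 < n
    · have hne : i ≠ ⟨i + 1, h⟩ := by simp [Fin.ext_iff]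
      simp [bond, energy, h, four_mul_star_dotProduct_twoSite_vecProj_mulVec hne]
    · simp [bond, energy, h]
  have htotal : ∑ i, energy i = 0 := by
    have hHn : Hn n ψ = ∑ i, bond i := rfl
    have : ∑ i, 4 * (star φ ⬝ᵥ (bond i *ᵥ φ)) = 0 := by
      rw [← Finset.mul_sum, ← dotProduct_sum, ← sum_mulVec, ← hHn, hφ, dotProduct_zero, mul_zero]
    simp only [henergy] at this
    exact_mod_cast this
  have hp : (p : ℕ) + 1 < n := hq ▸ q.isLt
  obtain rfl : q = ⟨p + 1, hp⟩ := Fin.ext hq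
  have hzero := (Finset.sum_eq_zero_iff_of_nonneg fun i _ => ?_).mp htotal p (Finset.mem_univ p)
  · ext x
    simp only [energy, dif_pos hp] at hzero
    exact Complex.normSq_eq_zero.mp
      ((Finset.sum_eq_zero_iff_of_nonneg fun x _ => Complex.normSq_nonneg _).mp hzero x
        (Finset.mem_univ x))
  · simp only [energy]
    split_ifs
    · exact Finset.sum_nonneg fun x _ => Complex.normSq_nonneg _
    · exact le_rfl

theorem smul_contract_contract_eq_of_lt {f g : Fin 2 → ℂ} (hfg : f 0 * g 1 - f 1 * g 0 ≠ 0)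
    {α β : ℂ} {φ : (Fin n → Fin 2) → ℂ}
    (hbond : ∀ p q : Fin n, (q : ℕ) = p + 1 →
      α • contract p f (contract q g φ) = β • contract p g (contract q f φ))
    {p q : Fin n} (hpq : p < q) :
    α ^ ((q : ℕ) - p) • contract p f (contract q g φ) =
      β ^ ((q : ℕ) - p) • contract p g (contract q f φ) := by
  obtain ⟨d, hd⟩ : ∃ d, (q : ℕ) = p + (d + 1) := ⟨q - p - 1, by omega⟩
  rw [show (q : ℕ) - p = d + 1 by omega]
  induction d generalizing p with
  | zero => simpa using hbond p q hd
  | succ d ih =>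
    set r : Fin n := ⟨p + 1, by omega⟩
    have hrp : r ≠ p := by simp [r, Fin.ext_iff]
    have hqp : q ≠ p := by simp [Fin.ext_iff]; omega
    have hqr : q ≠ r := by simp [r, Fin.ext_iff]; omega
    have hrq := ih (p := r) (by simp [r, Fin.lt_def]; omega) (by simp [r]; omega)
    have hpr := hbond p r rfl
    -- test the claim against `f` and `g` at the middle site `r`: each case chains the bond
    -- relation at `(p, r)` with the induction hypothesis at `(r, q)`
    apply eq_of_contract_eq hfg (k := r)
    · have h1 := congrArg (contract p f) hrq
      have h2 := congrArg (contract q f) hpr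
      simp only [map_smul, contract_comm hrp, contract_comm hqp, contract_comm hqr] at h1 h2 ⊢
      linear_combination (norm := module) α • h1 + β ^ (d + 1) • h2
    · have h1 := congrArg (contract p g) hrq
      have h2 := congrArg (contract q g) hpr
      simp only [map_smul, contract_comm hrp, contract_comm hqp, contract_comm hqr] at h1 h2 ⊢
      linear_combination (norm := module) α ^ (d + 1) • h2 + β • h1

end chain

theorem sum_normSq_eq_of_smul_eq {X : Type*} [Fintype X] {α β : ℂ} (hα : α ≠ 0)
    {φ χ : X → ℂ} (h : α • φ = β • χ) :
    ∑ x, Complex.normSq (φ x) =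
      Complex.normSq β / Complex.normSq α * ∑ x, Complex.normSq (χ x) := by
  rw [Finset.mul_sum]
  refine Finset.sum_congr rfl fun x _ => ?_
  have hx := congrArg Complex.normSq (congrFun h x)
  simp only [Pi.smul_apply, smul_eq_mul, map_mul] at hx
  field_simp [Complex.normSq_pos.mpr hα |>.ne']
  linear_combination hx

theorem star_vecCons {α : Type*} [Star α] {m : ℕ} (a : α) (v : Fin m → α) :
    star (vecCons a v) = vecCons (star a) (star v) := by
  ext i
  refine Fin.cases ?_ (fun i => ?_) i <;> simp

theorem normSq_pow_div_normSq_pow (μ₁ μ₂ : ℂ) (d : ℕ) :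
    Complex.normSq (μ₁ ^ d) / Complex.normSq (μ₂ ^ d) = (‖μ₂ / μ₁‖ ^ (2 * d))⁻¹ := by
  rw [map_pow, map_pow, ← Complex.sq_norm, ← Complex.sq_norm, norm_div, div_pow, inv_div,
    ← pow_mul, ← pow_mul, mul_comm]

theorem one_le_sq_div_one_sub_norm {c : ℂ} {s : ℝ} (hs : 0 < s)
    (hcs : Complex.normSq c + s ^ 2 = 1) : 1 ≤ s ^ 2 / (1 - ‖c‖) := by
  have hc : ‖c‖ ^ 2 + s ^ 2 = 1 := by rw [Complex.sq_norm]; exact hcs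
  have hc1 : ‖c‖ < 1 := by nlinarith [norm_nonneg c]
  rw [le_div_iff₀ (by linarith)]
  nlinarith [norm_nonneg c]

end SpinChain

open SpinChain

theorem correlator_bound
    (ψ : Fin 2 × Fin 2 → ℂ)
    (μ₁ μ₂ : ℂ)
    (habs : ‖μ₁‖ < ‖μ₂‖)
    (c : ℂ) (s : ℝ) (hs : 0 < s) (hcs : Complex.normSq c + s ^ 2 = 1)
    (hT0 : (Tmat ψ).mulVec ![1, 0] = μ₁ • ![1, 0])
    (hTv : (Tmat ψ).mulVec ![c, (s : ℂ)] = μ₂ • ![c, (s : ℂ)])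
    (n : ℕ) (i j : ℕ) (hi : 1 ≤ i) (hij : i < j) (hj : j ≤ n)
    (φ : (Fin n → Fin 2) → ℂ)
    (hφ : φ ∈ LinearMap.ker (Hn n ψ).mulVecLin)
    (hφn : ∑ x, Complex.normSq (φ x) = 1) :
    (star φ ⬝ᵥ ((prodProjOn n ![0, 1] (i - 1) i *
        prodProjOn n ![(s : ℂ), -(starRingEnd ℂ) c] (j - 1) j).mulVec φ)).re ≤
      (‖μ₂ / μ₁‖ ^ (2 * (j - i)))⁻¹ * s ^ 2 / (1 - ‖c‖) := by
  have hs0 : (s : ℂ) ≠ 0 := Complex.ofReal_ne_zero.mpr hs.ne'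
  obtain ⟨h00, h01, h10, h11⟩ := star_apply_eq_of_Tmat_mulVec hs0 hT0 hTv
  have hμ₂ : μ₂ ≠ 0 := norm_pos_iff.mp ((norm_nonneg μ₁).trans_lt habs)
  obtain ⟨p, rfl⟩ : ∃ p : Fin n, i = p + 1 := ⟨⟨i - 1, by omega⟩, by simp; omega⟩
  obtain ⟨q, rfl⟩ : ∃ q : Fin n, j = q + 1 := ⟨⟨j - 1, by omega⟩, by simp; omega⟩
  have hpq : p < q := Fin.lt_def.mpr (by omega)
  have htransfer := smul_contract_contract_eq_of_lt (f := ![0, 1]) (g := ![(s : ℂ), -c])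
    (by simpa using hs0)
    (fun p q hq => smul_contract_contract_eq_of_contract₂_eq_zero h00 h01 h10 h11
      (contract₂_eq_zero_of_Hn_mulVec_eq_zero (LinearMap.mem_ker.mp hφ) hq)) hpq
  have hbound := sum_normSq_contract_contract_le (k := p) (l := q) (φ := φ)
    (f := ![(s : ℂ), -c]) (g := ![0, 1]) (by simpa [add_comm, sq] using hcs) (by simp)
  norm_num [hφn] at hbound
  have hX : 0 ≤ (‖μ₂ / μ₁‖ ^ (2 * ((q : ℕ) - p)))⁻¹ := by positivity
  simp only [Nat.add_sub_cancel, Nat.add_sub_add_right,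
    re_star_dotProduct_prodProjOn_mul_prodProjOn_mulVec hpq.ne, star_vecCons, star_zero, star_one,
    Complex.star_def, Complex.conj_ofReal, map_neg, Complex.conj_conj, Matrix.empty_eq,
    sum_normSq_eq_of_smul_eq (pow_ne_zero _ hμ₂) htransfer, normSq_pow_div_normSq_pow]
  calc _ ≤ (‖μ₂ / μ₁‖ ^ (2 * ((q : ℕ) - p)))⁻¹ := by nlinarith
    _ ≤ _ := by
      rw [mul_div_assoc]
      exact le_mul_of_one_le_right hX (one_le_sq_div_one_sub_norm hs hcs)
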